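/- Proposition C.1 (existence, uniqueness and exponential convergence of the standing wave): Assume W satisfies the double-well assumptions. Then there exists a unique strictly increasing C² function q : ℝ → ℝ with values in (-1,1) such that q(0) = 0, q''(s) = W'(q(s)) for all s ∈ ℝ, and q(s) → 1 as s → +∞ and q(s) → −1 as s → −∞. Moreover there is a constant C > 0 such that |q(s) − 1| ≤ C exp(−s/C) for all s ≥ 0 and |q(s) + 1| ≤ C exp(s/C) for all s ≤ 0. -/

import Mathlib

open Set Filter Topology

noncomputable section

def DoubleWell (W : ℝ → ℝ) : Prop :=
  ContDiff ℝ 3 W ∧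
  (∀ u ∈ Set.Icc (-1:ℝ) 1, 0 ≤ W u) ∧
  W (-1) = 0 ∧ W 1 = 0 ∧
  (∀ u ∈ Set.Ioo (-1:ℝ) 1, 0 < W u) ∧
  deriv W (-1) = 0 ∧ deriv W 0 = 0 ∧ deriv W 1 = 0 ∧
  (∀ u ∈ Set.Ioo (-1:ℝ) 0, 0 < deriv W u) ∧
  (∀ u ∈ Set.Ioo (0:ℝ) 1, deriv W u < 0) ∧
  0 < deriv (deriv W) (-1) ∧ 0 < deriv (deriv W) 1 ∧ deriv (deriv W) 0 < 0

/-- The defining properties of the standing wave. -/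
def StandingWave (W q : ℝ → ℝ) : Prop :=
  ContDiff ℝ 2 q ∧ StrictMono q ∧ (∀ s, q s ∈ Set.Ioo (-1:ℝ) 1) ∧ q 0 = 0 ∧
  (∀ s, deriv (deriv q) s = deriv W (q s)) ∧
  Filter.Tendsto q Filter.atTop (nhds 1) ∧ Filter.Tendsto q Filter.atBot (nhds (-1))

/-!
The standing wave is the inverse of the transit time `T u = ∫ t in 0..u, (√(2 * W t))⁻¹`, which
is strictly increasing on `(-1, 1)`: inverting `T` solves the first-order equation
`q' = √(2 * W q)`, and differentiating once more gives `q'' = W' q`. Since `W` vanishes exactly to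
second order at `±1`, `T u` is comparable to `-log (1 - |u|)`; hence `T` maps `(-1, 1)` onto `ℝ`,
and `q` approaches `±1` exponentially fast.

Conversely, along any standing wave the energy `q'² / 2 - W q` is constant. It is nonnegative, being
at least `-W q → -W 1 = 0`, and nonpositive, as otherwise `q' ≥ √(2 E) > 0` and `q` would leave
`(-1, 1)`. So every standing wave solves `q' = √(2 * W q)` with `q 0 = 0`, i.e. `T ∘ q = id`.
-/

section QuadraticBounds

variable {f : ℝ → ℝ} {a : ℝ}

lemma abs_le_mul_sq_of_abs_deriv_deriv_le {D : Set ℝ} {M x : ℝ} (hf : Differentiable ℝ f)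
    (hf' : Differentiable ℝ (deriv f)) (hD : Convex ℝ D) (ha : a ∈ D) (h₀ : f a = 0)
    (h₁ : deriv f a = 0) (hM : ∀ y ∈ D, |deriv (deriv f) y| ≤ M) (hx : x ∈ D) :
    |f x| ≤ M * (x - a) ^ 2 := by
  have hM₀ : 0 ≤ M := (abs_nonneg _).trans (hM a ha)
  have hderiv : ∀ y ∈ uIcc a x, ‖deriv f y‖ ≤ M * |x - a| := by
    intro y hy
    have h := hD.norm_image_sub_le_of_norm_deriv_le (fun z _ => hf' z) hM ha
      (hD.ordConnected.uIcc_subset ha hx hy)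
    rw [h₁, sub_zero] at h
    exact h.trans (mul_le_mul_of_nonneg_left (abs_sub_left_of_mem_uIcc hy) hM₀)
  have h := (convex_uIcc a x).norm_image_sub_le_of_norm_deriv_le (fun z _ => hf z) hderiv
    left_mem_uIcc right_mem_uIcc
  rw [h₀, sub_zero, Real.norm_eq_abs, Real.norm_eq_abs] at h
  rwa [mul_assoc, ← sq, sq_abs] at h

lemma eventually_mul_sq_le_of_deriv_deriv_pos (hf : ContDiff ℝ 2 f) (h₀ : f a = 0)
    (h₁ : deriv f a = 0) (h₂ : 0 < deriv (deriv f) a) :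
    ∀ᶠ x in 𝓝 a, deriv (deriv f) a / 4 * (x - a) ^ 2 ≤ f x := by
  set k := deriv (deriv f) a
  have hdf : ∀ x, HasDerivAt f (deriv f x) x :=
    fun x => (hf.differentiable (by norm_num) x).hasDerivAt
  have hddf : ∀ x, HasDerivAt (deriv f) (deriv (deriv f) x) x :=
    fun x => (hf.differentiable_deriv_two x).hasDerivAt
  set g : ℝ → ℝ := fun x => f x - k / 2 * (x - a) ^ 2
  have hdg : ∀ x, HasDerivAt g (deriv f x - k * (x - a)) x := fun x => by
    refine ((hdf x).sub ((((hasDerivAt_id x).sub_const a).pow 2).const_mul (k / 2))).congr_deriv ?_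
    simp only [id, Nat.cast_ofNat]
    ring
  have hddg : ∀ x, HasDerivAt (deriv g) (deriv (deriv f) x - k) x := fun x => by
    rw [show deriv g = fun x => deriv f x - k * (x - a) from funext fun x => (hdg x).deriv]
    exact ((hddf x).sub (((hasDerivAt_id x).sub_const a).const_mul k)).congr_deriv (by ring)
  obtain ⟨δ, hδ, hclose⟩ := Metric.continuousAt_iff.mp
    ((show ContDiff ℝ (1 + 1) f from hf).deriv'.continuous_deriv_one.continuousAt (x := a))
    (k / 4) (by positivity)
  filter_upwards [Metric.ball_mem_nhds a hδ] with x hx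
  have hg := abs_le_mul_sq_of_abs_deriv_deriv_le (fun x => (hdg x).differentiableAt)
    (fun x => (hddg x).differentiableAt) (convex_ball a δ) (Metric.mem_ball_self hδ)
    (by simp [g, h₀]) (by simp [(hdg a).deriv, h₁])
    (fun y hy => by rw [(hddg y).deriv]; exact (hclose hy).le) hx
  have := (abs_le.mp hg).1
  simp only [g] at this
  nlinarith [sq_nonneg (x - a)]
lemma exists_mul_sq_le_of_isCompact {c₀ : ℝ} {K : Set ℝ} (hK : IsCompact K)
    (hf : ContinuousOn f K) (hpos : ∀ x ∈ K, x ≠ a → 0 < f x) (hc₀ : 0 < c₀)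
    (hnear : ∀ᶠ x in 𝓝 a, c₀ * (x - a) ^ 2 ≤ f x) :
    ∃ c > 0, ∀ x ∈ K, c * (x - a) ^ 2 ≤ f x := by
  obtain ⟨U, hU, hUo, haU⟩ := eventually_nhds_iff.mp hnear
  have hne : ∀ x ∈ K \ U, (x - a) ^ 2 ≠ 0 := fun x hx =>
    pow_ne_zero 2 (sub_ne_zero.2 fun h => hx.2 (h ▸ haU))
  obtain ⟨c₁, hc₁, hle⟩ := (hK.diff hUo).exists_forall_le' (f := fun x => f x / (x - a) ^ 2)
    ((hf.mono sdiff_subset).div (by fun_prop) hne)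
    (fun x hx => div_pos (hpos x hx.1 fun h => hx.2 (h ▸ haU))
      (lt_of_le_of_ne (sq_nonneg _) (hne x hx).symm))
  refine ⟨min c₀ c₁, lt_min hc₀ hc₁, fun x hx => ?_⟩
  by_cases hxU : x ∈ U
  · exact (mul_le_mul_of_nonneg_right (min_le_left _ _) (sq_nonneg _)).trans (hU x hxU)
  · have h := hle x ⟨hx, hxU⟩
    rw [le_div_iff₀ (lt_of_le_of_ne (sq_nonneg _) (hne x ⟨hx, hxU⟩).symm)] at h
    exact (mul_le_mul_of_nonneg_right (min_le_right _ _) (sq_nonneg _)).trans h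

end QuadraticBounds

namespace DoubleWell

variable {W : ℝ → ℝ}

lemma continuous (hW : DoubleWell W) : Continuous W := hW.1.continuous

lemma pos (hW : DoubleWell W) : ∀ u ∈ Ioo (-1:ℝ) 1, 0 < W u := hW.2.2.2.2.1

lemma exists_sq_bounds (hW : DoubleWell W) : ∃ c > 0, ∃ M,
    (∀ u ∈ Icc (0:ℝ) 1, c * (u - 1) ^ 2 ≤ W u ∧ W u ≤ M * (u - 1) ^ 2) ∧
    (∀ u ∈ Icc (-1:ℝ) 0, c * (u + 1) ^ 2 ≤ W u ∧ W u ≤ M * (u + 1) ^ 2) := by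
  obtain ⟨hC3, -, hWL, hWR, hpos, hW'L, -, hW'R, -, -, hW''L, hW''R, -⟩ := hW
  have hC2 : ContDiff ℝ 2 W := hC3.of_le (by norm_num)
  obtain ⟨M, hM⟩ := isCompact_Icc.exists_bound_of_continuousOn (s := Icc (-1:ℝ) 1)
    ((show ContDiff ℝ (1 + 1) W from hC2).deriv'.continuous_deriv_one.continuousOn)
  have hupper : ∀ a ∈ Icc (-1:ℝ) 1, W a = 0 → deriv W a = 0 →
      ∀ u ∈ Icc (-1:ℝ) 1, W u ≤ M * (u - a) ^ 2 := fun a ha h₀ h₁ u hu =>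
    (le_abs_self _).trans <| abs_le_mul_sq_of_abs_deriv_deriv_le (hC2.differentiable (by norm_num))
      hC2.differentiable_deriv_two (convex_Icc _ _) ha h₀ h₁ hM hu
  obtain ⟨cR, hcR, hlowR⟩ := exists_mul_sq_le_of_isCompact (K := Icc (0:ℝ) 1) isCompact_Icc
    hC2.continuous.continuousOn
    (fun u hu hne => hpos u ⟨by linarith [hu.1], lt_of_le_of_ne hu.2 hne⟩) (by positivity)
    (eventually_mul_sq_le_of_deriv_deriv_pos hC2 hWR hW'R hW''R)
  obtain ⟨cL, hcL, hlowL⟩ := exists_mul_sq_le_of_isCompact (K := Icc (-1:ℝ) 0) isCompact_Icc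
    hC2.continuous.continuousOn
    (fun u hu hne => hpos u ⟨lt_of_le_of_ne hu.1 hne.symm, by linarith [hu.2]⟩) (by positivity)
    (eventually_mul_sq_le_of_deriv_deriv_pos hC2 hWL hW'L hW''L)
  refine ⟨min cR cL, lt_min hcR hcL, M, fun u hu => ⟨?_, ?_⟩, fun u hu => ⟨?_, ?_⟩⟩
  · exact (mul_le_mul_of_nonneg_right (min_le_left _ _) (sq_nonneg _)).trans (hlowR u hu)
  · exact hupper 1 (by norm_num) hWR hW'R u ⟨by linarith [hu.1], hu.2⟩
  · have := hlowL u hu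
    rw [sub_neg_eq_add] at this
    exact (mul_le_mul_of_nonneg_right (min_le_right _ _) (sq_nonneg _)).trans this
  · simpa using hupper (-1) (by norm_num) hWL hW'L u ⟨hu.1, by linarith [hu.2]⟩

end DoubleWell

def transitTime (W : ℝ → ℝ) (u : ℝ) : ℝ := ∫ t in (0:ℝ)..u, (√(2 * W t))⁻¹

section TransitTime

variable {W : ℝ → ℝ}

@[simp]
lemma transitTime_zero : transitTime W 0 = 0 := intervalIntegral.integral_same

lemma transitTime_comp_neg (u : ℝ) :
    transitTime (fun t => W (-t)) u = -transitTime W (-u) := by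
  rw [transitTime, intervalIntegral.integral_comp_neg (fun t => (√(2 * W t))⁻¹), neg_zero,
    intervalIntegral.integral_symm, transitTime]

lemma continuousOn_inv_sqrt_two_mul {s : Set ℝ} (hWc : Continuous W) (hpos : ∀ t ∈ s, 0 < W t) :
    ContinuousOn (fun t => (√(2 * W t))⁻¹) s :=
  (by fun_prop : Continuous fun t => √(2 * W t)).continuousOn.inv₀
    fun t ht => (Real.sqrt_pos.2 (by linarith [hpos t ht])).ne'

lemma hasDerivAt_transitTime (hWc : Continuous W) (hpos : ∀ t ∈ Ioo (-1:ℝ) 1, 0 < W t) {u : ℝ}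
    (hu : u ∈ Ioo (-1:ℝ) 1) : HasDerivAt (transitTime W) (√(2 * W u))⁻¹ u :=
  have hρ := continuousOn_inv_sqrt_two_mul hWc hpos
  intervalIntegral.integral_hasDerivAt_right
    (hρ.mono (ordConnected_Ioo.uIcc_subset (by norm_num) hu)).intervalIntegrable
    (hρ.stronglyMeasurableAtFilter isOpen_Ioo u hu) (hρ.continuousAt (isOpen_Ioo.mem_nhds hu))

lemma strictMonoOn_transitTime (hWc : Continuous W) (hpos : ∀ t ∈ Ioo (-1:ℝ) 1, 0 < W t) :
    StrictMonoOn (transitTime W) (Ioo (-1:ℝ) 1) :=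
  strictMonoOn_of_deriv_pos (convex_Ioo _ _)
    (fun _ hu => (hasDerivAt_transitTime hWc hpos hu).continuousAt.continuousWithinAt)
    fun u hu => by
      rw [interior_Ioo] at hu
      rw [(hasDerivAt_transitTime hWc hpos hu).deriv]
      exact inv_pos.2 (Real.sqrt_pos.2 (by linarith [hpos u hu]))

lemma integral_inv_one_sub {u : ℝ} (hu : u < 1) :
    ∫ t in (0:ℝ)..u, (1 - t)⁻¹ = -Real.log (1 - u) := by
  rw [intervalIntegral.integral_comp_sub_left (fun t => t⁻¹) 1, sub_zero,
    integral_inv (notMem_uIcc_of_lt (by linarith) one_pos),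
    div_eq_inv_mul, mul_one, Real.log_inv]

lemma inv_sqrt_two_mul_mul_sq {c t : ℝ} (hc : 0 ≤ c) (ht : t < 1) :
    (√(2 * (c * (t - 1) ^ 2)))⁻¹ = (√(2 * c))⁻¹ * (1 - t)⁻¹ := by
  rw [← mul_assoc, Real.sqrt_mul (by positivity), Real.sqrt_sq_eq_abs, abs_sub_comm,
    abs_of_pos (by linarith), mul_inv]

lemma transitTime_bounds {c M u : ℝ} (hWc : Continuous W) (hc : 0 < c)
    (hW : ∀ t ∈ Ico (0:ℝ) 1, c * (t - 1) ^ 2 ≤ W t ∧ W t ≤ M * (t - 1) ^ 2)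
    (hu : u ∈ Ico (0:ℝ) 1) :
    (√(2 * M))⁻¹ * -Real.log (1 - u) ≤ transitTime W u ∧
      transitTime W u ≤ (√(2 * c))⁻¹ * -Real.log (1 - u) := by
  have hpos : ∀ t ∈ Ico (0:ℝ) 1, 0 < c * (t - 1) ^ 2 := fun t ht =>
    mul_pos hc (sq_pos_of_neg (by linarith [ht.2]))
  have hsub : uIcc 0 u ⊆ Ico (0:ℝ) 1 := ordConnected_Ico.uIcc_subset (by simp) hu
  have hρ : IntervalIntegrable (fun t => (√(2 * W t))⁻¹) MeasureTheory.volume 0 u :=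
    ((continuousOn_inv_sqrt_two_mul hWc fun t ht => (hpos t ht).trans_le (hW t ht).1).mono
      hsub).intervalIntegrable
  have hinv : IntervalIntegrable (fun t : ℝ => (1 - t)⁻¹) MeasureTheory.volume 0 u :=
    ((by fun_prop : Continuous fun t : ℝ => 1 - t).continuousOn.inv₀
      fun t ht => by linarith [(hsub ht).2]).intervalIntegrable
  have hM : 0 ≤ M := by
    have h := hW 0 (by simp)
    nlinarith [h.1.trans h.2]
  constructor
  · rw [transitTime, ← integral_inv_one_sub hu.2, ← intervalIntegral.integral_const_mul]
    refine intervalIntegral.integral_mono_on hu.1 (hinv.const_mul _) hρ fun t ht => ?_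
    have ht' : t ∈ Ico (0:ℝ) 1 := hsub (Icc_subset_uIcc ht)
    rw [← inv_sqrt_two_mul_mul_sq hM ht'.2]
    exact inv_anti₀ (Real.sqrt_pos.2 (by linarith [(hpos t ht').trans_le (hW t ht').1]))
      (Real.sqrt_le_sqrt (by linarith [(hW t ht').2]))
  · rw [transitTime, ← integral_inv_one_sub hu.2, ← intervalIntegral.integral_const_mul]
    refine intervalIntegral.integral_mono_on hu.1 hρ (hinv.const_mul _) fun t ht => ?_
    have ht' : t ∈ Ico (0:ℝ) 1 := hsub (Icc_subset_uIcc ht)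
    rw [← inv_sqrt_two_mul_mul_sq hc.le ht'.2]
    exact inv_anti₀ (Real.sqrt_pos.2 (by linarith [hpos t ht']))
      (Real.sqrt_le_sqrt (by linarith [(hW t ht').1]))

end TransitTime

lemma one_sub_le_exp_of_le_mul_neg_log {u σ K : ℝ} (hK : 0 < K) (hu : u < 1)
    (h : σ ≤ K * -Real.log (1 - u)) : 1 - u ≤ Real.exp (-σ / K) := by
  rw [← Real.exp_log (sub_pos.2 hu), Real.exp_le_exp, neg_div, le_neg, div_le_iff₀ hK]
  linarith

lemma exp_neg_div_le_mul_exp_neg_div {σ K C : ℝ} (hσ : 0 ≤ σ) (hK : 0 < K) (hKC : K ≤ C)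
    (hC : 1 ≤ C) :
    Real.exp (-σ / K) ≤ C * Real.exp (-σ / C) :=
  calc Real.exp (-σ / K) ≤ Real.exp (-σ / C) :=
        Real.exp_le_exp.2 (by
          rw [neg_div, neg_div, neg_le_neg_iff]; exact div_le_div_of_nonneg_left hσ hK hKC)
    _ ≤ C * Real.exp (-σ / C) := le_mul_of_one_le_left (Real.exp_pos _).le hC

lemma energy_eq_of_deriv_deriv_eq {W q : ℝ → ℝ} (hW : Differentiable ℝ W) (hq : ContDiff ℝ 2 q)
    (hode : ∀ s, deriv (deriv q) s = deriv W (q s)) (s t : ℝ) :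
    deriv q s ^ 2 / 2 - W (q s) = deriv q t ^ 2 / 2 - W (q t) := by
  have hE : ∀ s, HasDerivAt (fun s => deriv q s ^ 2 / 2 - W (q s)) 0 s := fun s => by
    have h₁ : HasDerivAt (deriv q) (deriv W (q s)) s :=
      hode s ▸ (hq.differentiable_deriv_two s).hasDerivAt
    have h₂ := (hW (q s)).hasDerivAt.comp s (hq.differentiable (by norm_num) s).hasDerivAt
    refine (((h₁.pow 2).div_const 2).sub h₂).congr_deriv ?_
    simp only [Nat.cast_ofNat]
    ring
  exact is_const_of_deriv_eq_zero (fun s => (hE s).differentiableAt) (fun s => (hE s).deriv) s t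

namespace DoubleWell

variable {W : ℝ → ℝ}

lemma exists_transitTime_bounds (hW : DoubleWell W) : ∃ k > 0, ∃ K > 0, ∀ u ∈ Ico (0:ℝ) 1,
    (k * -Real.log (1 - u) ≤ transitTime W u ∧ transitTime W u ≤ K * -Real.log (1 - u)) ∧
    (k * -Real.log (1 - u) ≤ -transitTime W (-u) ∧
      -transitTime W (-u) ≤ K * -Real.log (1 - u)) := by
  obtain ⟨c, hc, M, hR, hL⟩ := hW.exists_sq_bounds
  have hM : 0 < M := by
    have h := hR 0 (by simp)
    nlinarith [h.1.trans h.2]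
  refine ⟨(√(2 * M))⁻¹, inv_pos.2 (Real.sqrt_pos.2 (by positivity)), (√(2 * c))⁻¹,
    inv_pos.2 (Real.sqrt_pos.2 (by positivity)), fun u hu => ⟨?_, ?_⟩⟩
  · exact transitTime_bounds hW.continuous hc (fun t ht => hR t (Ico_subset_Icc_self ht)) hu
  · rw [← transitTime_comp_neg]
    refine transitTime_bounds (hW.continuous.comp continuous_neg) hc (fun t ht => ?_) hu
    have h := hL (-t) ⟨by linarith [ht.2], by linarith [ht.1]⟩
    rwa [show (-t + 1) ^ 2 = (t - 1) ^ 2 by ring] at h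

lemma surjOn_transitTime (hW : DoubleWell W) : SurjOn (transitTime W) (Ioo (-1:ℝ) 1) univ := by
  obtain ⟨k, hk, _, _, hbounds⟩ := hW.exists_transitTime_bounds
  intro s _
  set u := 1 - Real.exp (-(|s| / k))
  have hu : u ∈ Ico (0:ℝ) 1 :=
    ⟨sub_nonneg.2 (Real.exp_le_one_iff.2 (neg_nonpos.2 (by positivity))),
      sub_lt_self _ (Real.exp_pos _)⟩
  have hlog : k * -Real.log (1 - u) = |s| := by
    rw [sub_sub_cancel, Real.log_exp, neg_neg, mul_div_cancel₀ _ hk.ne']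
  have hsub : Icc (-u) u ⊆ Ioo (-1:ℝ) 1 := Icc_subset_Ioo (by linarith [hu.2]) hu.2
  have hs : s ∈ Icc (transitTime W (-u)) (transitTime W u) :=
    ⟨by linarith [neg_abs_le s, (hbounds u hu).2.1],
      by linarith [le_abs_self s, (hbounds u hu).1.1]⟩
  obtain ⟨v, hv, hTv⟩ := intermediate_value_Icc (neg_le_self hu.1) (fun x hx =>
    (hasDerivAt_transitTime hW.continuous hW.pos (hsub hx)).continuousAt.continuousWithinAt) hs
  exact ⟨v, hsub hv, hTv⟩

def transitTimeOrderIso (hW : DoubleWell W) : Ioo (-1:ℝ) 1 ≃o ℝ :=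
  StrictMono.orderIsoOfSurjective (fun u => transitTime W u)
    (fun u v huv => strictMonoOn_transitTime hW.continuous hW.pos u.2 v.2 huv)
    fun s => let ⟨u, hu, hus⟩ := hW.surjOn_transitTime (mem_univ s); ⟨⟨u, hu⟩, hus⟩

def standingWave (hW : DoubleWell W) (s : ℝ) : ℝ := hW.transitTimeOrderIso.symm s

lemma standingWave_mem (hW : DoubleWell W) (s : ℝ) : hW.standingWave s ∈ Ioo (-1:ℝ) 1 :=
  (hW.transitTimeOrderIso.symm s).2

lemma transitTime_standingWave (hW : DoubleWell W) (s : ℝ) :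
    transitTime W (hW.standingWave s) = s :=
  hW.transitTimeOrderIso.apply_symm_apply s

lemma strictMono_standingWave (hW : DoubleWell W) : StrictMono hW.standingWave :=
  (Subtype.strictMono_coe _).comp hW.transitTimeOrderIso.symm.strictMono

lemma continuous_standingWave (hW : DoubleWell W) : Continuous hW.standingWave :=
  continuous_subtype_val.comp hW.transitTimeOrderIso.symm.continuous

lemma range_standingWave (hW : DoubleWell W) : range hW.standingWave = Ioo (-1:ℝ) 1 := by
  change range (Subtype.val ∘ hW.transitTimeOrderIso.symm) = _
  rw [range_comp, hW.transitTimeOrderIso.symm.range_eq, image_univ, Subtype.range_coe]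

lemma standingWave_zero (hW : DoubleWell W) : hW.standingWave 0 = 0 :=
  (strictMonoOn_transitTime hW.continuous hW.pos).injOn (hW.standingWave_mem 0) (by norm_num)
    (by rw [transitTime_standingWave, transitTime_zero])

lemma hasDerivAt_standingWave (hW : DoubleWell W) (s : ℝ) :
    HasDerivAt hW.standingWave (√(2 * W (hW.standingWave s))) s := by
  have hpos := hW.pos _ (hW.standingWave_mem s)
  simpa using (hasDerivAt_transitTime hW.continuous hW.pos
    (hW.standingWave_mem s)).of_local_left_inverse hW.continuous_standingWave.continuousAt
    (inv_ne_zero (Real.sqrt_pos.2 (by linarith)).ne')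
    (Eventually.of_forall hW.transitTime_standingWave)

lemma hasDerivAt_sqrt_two_mul_comp_standingWave (hW : DoubleWell W) (s : ℝ) :
    HasDerivAt (fun s => √(2 * W (hW.standingWave s))) (deriv W (hW.standingWave s)) s := by
  have hpos : 0 < 2 * W (hW.standingWave s) := by linarith [hW.pos _ (hW.standingWave_mem s)]
  have h := (((hW.1.differentiable (by norm_num) _).hasDerivAt.comp s
    (hW.hasDerivAt_standingWave s)).const_mul 2).sqrt hpos.ne'
  refine h.congr_deriv ?_
  simp only [Function.comp_apply]
  field_simp [(Real.sqrt_pos.2 hpos).ne']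

lemma standingWave_spec (hW : DoubleWell W) : StandingWave W hW.standingWave := by
  set q := hW.standingWave
  have hq' : deriv q = fun s => √(2 * W (q s)) :=
    funext fun s => (hW.hasDerivAt_standingWave s).deriv
  have hq'' : deriv (fun s => √(2 * W (q s))) = fun s => deriv W (q s) :=
    funext fun s => (hW.hasDerivAt_sqrt_two_mul_comp_standingWave s).deriv
  have hbdd : BddAbove (range q) ∧ BddBelow (range q) := by
    rw [range_standingWave]; exact ⟨bddAbove_Ioo, bddBelow_Ioo⟩
  have htop := tendsto_atTop_ciSup hW.strictMono_standingWave.monotone hbdd.1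
  have hbot := tendsto_atBot_ciInf hW.strictMono_standingWave.monotone hbdd.2
  rw [iSup, range_standingWave, csSup_Ioo (by norm_num)] at htop
  rw [iInf, range_standingWave, csInf_Ioo (by norm_num)] at hbot
  refine ⟨?_, hW.strictMono_standingWave, hW.standingWave_mem, hW.standingWave_zero,
    fun s => by rw [hq', hq''], htop, hbot⟩
  rw [show (2 : WithTop ℕ∞) = 1 + 1 from rfl, contDiff_succ_iff_deriv, contDiff_one_iff_deriv, hq',
    hq'']
  exact ⟨fun s => (hW.hasDerivAt_standingWave s).differentiableAt, by simp,
    fun s => (hW.hasDerivAt_sqrt_two_mul_comp_standingWave s).differentiableAt,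
    (hW.1.continuous_deriv (by norm_num)).comp hW.continuous_standingWave⟩

lemma standingWave_exp_decay (hW : DoubleWell W) : ∃ C > 0,
    (∀ s : ℝ, 0 ≤ s → |hW.standingWave s - 1| ≤ C * Real.exp (-s / C)) ∧
      (∀ s : ℝ, s ≤ 0 → |hW.standingWave s + 1| ≤ C * Real.exp (s / C)) := by
  obtain ⟨_, _, K, hK, hbounds⟩ := hW.exists_transitTime_bounds
  have hdecay : ∀ u ∈ Ico (0:ℝ) 1, ∀ σ, 0 ≤ σ → σ ≤ K * -Real.log (1 - u) →
      1 - u ≤ max K 1 * Real.exp (-σ / max K 1) := fun u hu σ hσ h =>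
    (one_sub_le_exp_of_le_mul_neg_log hK hu.2 h).trans
      (exp_neg_div_le_mul_exp_neg_div hσ hK (le_max_left _ _) (le_max_right _ _))
  have hq0 := hW.standingWave_zero
  refine ⟨max K 1, by positivity, fun s hs => ?_, fun s hs => ?_⟩
  · have hu : hW.standingWave s ∈ Ico (0:ℝ) 1 :=
      ⟨hq0 ▸ hW.strictMono_standingWave.monotone hs, (hW.standingWave_mem s).2⟩
    rw [abs_sub_comm, abs_of_nonneg (by linarith [hu.2])]
    refine hdecay _ hu s hs ?_
    simpa only [hW.transitTime_standingWave] using (hbounds _ hu).1.2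
  · have hu : -hW.standingWave s ∈ Ico (0:ℝ) 1 :=
      ⟨neg_nonneg.2 (hq0 ▸ hW.strictMono_standingWave.monotone hs),
        neg_lt.1 (hW.standingWave_mem s).1⟩
    have h := hdecay _ hu (-s) (neg_nonneg.2 hs)
      (by simpa only [neg_neg, hW.transitTime_standingWave] using (hbounds _ hu).2.2)
    rw [neg_neg, sub_neg_eq_add, add_comm] at h
    rwa [abs_of_nonneg (by linarith [hu.2])]

end DoubleWell

namespace StandingWave

variable {W q : ℝ → ℝ}

lemma sq_deriv_eq (hW : DoubleWell W) (hq : StandingWave W q) (s : ℝ) :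
    deriv q s ^ 2 = 2 * W (q s) := by
  obtain ⟨hC2, hmono, hmem, hq0, hode, htop, -⟩ := hq
  obtain ⟨hW₃, hW_nonneg, -, hW₁, -⟩ := hW
  obtain ⟨E, hE⟩ : ∃ E, ∀ s, deriv q s ^ 2 = 2 * E + 2 * W (q s) :=
    ⟨deriv q 0 ^ 2 / 2 - W (q 0), fun s => by
      linarith [energy_eq_of_deriv_deriv_eq (hW₃.differentiable (by norm_num)) hC2 hode s 0]⟩
  have hE_nonneg : 0 ≤ E := by
    have hlim : Tendsto (fun s => -W (q s)) atTop (𝓝 0) := by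
      simpa [hW₁] using ((hW₃.continuous.tendsto 1).comp htop).neg
    exact le_of_tendsto' hlim fun s => by nlinarith [hE s, sq_nonneg (deriv q s)]
  have hE_nonpos : E ≤ 0 := by
    by_contra! hE_pos
    set κ := √(2 * E)
    have hκ : 0 < κ := Real.sqrt_pos.2 (by linarith)
    have hslope : ∀ s, κ ≤ deriv q s := fun s => by
      rw [← Real.sqrt_sq hmono.monotone.deriv_nonneg]
      exact Real.sqrt_le_sqrt (by linarith [hE s, hW_nonneg _ (Ioo_subset_Icc_self (hmem s))])
    have h := mul_sub_le_image_sub_of_le_deriv (hC2.differentiable (by norm_num)) hslope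
      (div_pos two_pos hκ).le
    rw [hq0, sub_zero, sub_zero, mul_div_cancel₀ _ hκ.ne'] at h
    linarith [(hmem (2 / κ)).2]
  rw [hE s, le_antisymm hE_nonpos hE_nonneg]
  ring

lemma transitTime_eq (hW : DoubleWell W) (hq : StandingWave W q) (s : ℝ) :
    transitTime W (q s) = s := by
  have hsq := hq.sq_deriv_eq hW
  obtain ⟨hC2, hmono, hmem, hq0, -⟩ := hq
  have hd : ∀ s, HasDerivAt (fun s => transitTime W (q s) - s) 0 s := fun s => by
    have hpos : 0 < √(2 * W (q s)) := Real.sqrt_pos.2 (by linarith [hW.pos _ (hmem s)])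
    have hq' : deriv q s = √(2 * W (q s)) := by
      rw [← Real.sqrt_sq hmono.monotone.deriv_nonneg, hsq s]
    have h := (hasDerivAt_transitTime hW.continuous hW.pos (hmem s)).comp s
      (hC2.differentiable (by norm_num) s).hasDerivAt
    rw [hq', inv_mul_cancel₀ hpos.ne'] at h
    exact (h.sub (hasDerivAt_id s)).congr_deriv (sub_self 1)
  simpa [hq0, sub_eq_zero] using
    is_const_of_deriv_eq_zero (fun s => (hd s).differentiableAt) (fun s => (hd s).deriv) s 0

lemma eq_standingWave (hW : DoubleWell W) (hq : StandingWave W q) : q = hW.standingWave :=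
  funext fun s => (strictMonoOn_transitTime hW.continuous hW.pos).injOn (hq.2.2.1 s)
    (hW.standingWave_mem s) (by rw [hq.transitTime_eq hW, hW.transitTime_standingWave])

end StandingWave

theorem standing_wave_exists_unique_exp_decay (W : ℝ → ℝ) (hW : DoubleWell W) :
    ∃ q : ℝ → ℝ, StandingWave W q ∧ (∀ q' : ℝ → ℝ, StandingWave W q' → q' = q) ∧
      ∃ C > 0, (∀ s : ℝ, 0 ≤ s → |q s - 1| ≤ C * Real.exp (-s / C)) ∧
        (∀ s : ℝ, s ≤ 0 → |q s + 1| ≤ C * Real.exp (s / C)) :=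
  ⟨hW.standingWave, hW.standingWave_spec, fun _ hq => hq.eq_standingWave hW,
    hW.standingWave_exp_decay⟩

end
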